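/- Let μ > 0 and λ > −(2/3)μ, and define Q₃(F) = 2μ|sym F|² + λ(tr F)² for F ∈ ℝ^{3×3}. Then for every π ∈ ℝ and every G ∈ ℝ^{2×2}, the minimum over a ∈ ℝ³ of Q₃(ι(G) + a⊗e₃) + 2π a₃ is attained and equals 2μ|sym G|² + (2μλ/(2μ+λ))(tr G)² − π(2λ/(2μ+λ)) tr G − π²/(2μ+λ). -/

import Mathlib

/-! The energy of `ι(G) + a ⊗ e₃` splits as the energy of `G` plus `μ a₁² + μ a₂²` plus a
one-variable quadratic `(2μ + λ) a₃² + 2 (λ tr G + π) a₃` in the out-of-plane stretch.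
Since `λ > -(2/3)μ` gives `2μ + λ > 0`, the minimum is at `a = (0, 0, -(λ tr G + π)/(2μ + λ))`,
where completing the square yields the stated value. -/

noncomputable section

/-- Embedding of a `2 × 2` matrix into `3 × 3` matrices (upper-left block). -/
def iota (G : Matrix (Fin 2) (Fin 2) ℝ) : Matrix (Fin 3) (Fin 3) ℝ :=
  Matrix.of fun i j =>
    if hi : (i : ℕ) < 2 then
      if hj : (j : ℕ) < 2 then G ⟨(i : ℕ), hi⟩ ⟨(j : ℕ), hj⟩ else 0
    else 0

/-- The matrix `a ⊗ e₃`, whose third column is `a` and whose other columns vanish. -/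
def col3 (a : Fin 3 → ℝ) : Matrix (Fin 3) (Fin 3) ℝ :=
  Matrix.of fun i j => if j = 2 then a i else 0

/-- Squared Frobenius norm of a square matrix. -/
def frobSq {n : ℕ} (F : Matrix (Fin n) (Fin n) ℝ) : ℝ := ∑ i, ∑ j, (F i j) ^ 2

/-- Symmetric part of a square matrix. -/
def symPart {n : ℕ} (F : Matrix (Fin n) (Fin n) ℝ) : Matrix (Fin n) (Fin n) ℝ :=
  (1 / 2 : ℝ) • (F + F.transpose)

lemma energy_iota_add_col3 (μ lam π : ℝ) (G : Matrix (Fin 2) (Fin 2) ℝ) (a : Fin 3 → ℝ) :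
    (2 * μ * frobSq (symPart (iota G + col3 a))
      + lam * ((iota G + col3 a).trace) ^ 2) + 2 * π * a 2
    = 2 * μ * frobSq (symPart G) + lam * G.trace ^ 2 + μ * a 0 ^ 2 + μ * a 1 ^ 2
      + ((2 * μ + lam) * a 2 ^ 2 + 2 * (lam * G.trace + π) * a 2) := by
  simp [frobSq, symPart, iota, col3, Matrix.trace, Fin.sum_univ_succ]
  ring

lemma neg_sq_div_le_quadratic {c : ℝ} (hc : 0 < c) (b t : ℝ) :
    -b ^ 2 / c ≤ c * t ^ 2 + 2 * b * t := by
  have hsq : c * t ^ 2 + 2 * b * t - -b ^ 2 / c = (c * t + b) ^ 2 / c := by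
    field_simp
    ring
  have : 0 ≤ (c * t + b) ^ 2 / c := by positivity
  linarith

lemma quadratic_at_vertex {c : ℝ} (hc : c ≠ 0) (b : ℝ) :
    c * (-b / c) ^ 2 + 2 * b * (-b / c) = -b ^ 2 / c := by
  field_simp
  ring

/-- Isotropic case: with `Q₃(F) = 2μ|sym F|² + λ(tr F)²`, the minimum over `a ∈ ℝ³` of
`Q₃(ι(G) + a⊗e₃) + 2π a₃` is attained and equals
`2μ|sym G|² + (2μλ/(2μ+λ))(tr G)² − π(2λ/(2μ+λ)) tr G − π²/(2μ+λ)`. -/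
theorem stmt3 (μ lam : ℝ) (hμ : 0 < μ) (hlam : -(2 / 3) * μ < lam)
    (π : ℝ) (G : Matrix (Fin 2) (Fin 2) ℝ) :
    IsLeast
      (Set.range fun a : Fin 3 → ℝ =>
        (2 * μ * frobSq (symPart (iota G + col3 a))
          + lam * ((iota G + col3 a).trace) ^ 2) + 2 * π * a 2)
      (2 * μ * frobSq (symPart G) + (2 * μ * lam / (2 * μ + lam)) * (G.trace) ^ 2
        - π * (2 * lam / (2 * μ + lam)) * G.trace - π ^ 2 / (2 * μ + lam)) := by
  have hc : 0 < 2 * μ + lam := by linarith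
  have hvalue : 2 * μ * frobSq (symPart G) + (2 * μ * lam / (2 * μ + lam)) * G.trace ^ 2
        - π * (2 * lam / (2 * μ + lam)) * G.trace - π ^ 2 / (2 * μ + lam)
      = 2 * μ * frobSq (symPart G) + lam * G.trace ^ 2
        + -(lam * G.trace + π) ^ 2 / (2 * μ + lam) := by
    field_simp
    ring
  rw [hvalue]
  refine ⟨⟨![0, 0, -(lam * G.trace + π) / (2 * μ + lam)], ?_⟩, ?_⟩
  · dsimp only
    rw [energy_iota_add_col3]
    simp only [Matrix.cons_val_zero, Matrix.cons_val_one, Matrix.cons_val]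
    rw [quadratic_at_vertex hc.ne']
    ring
  · rintro _ ⟨a, rfl⟩
    dsimp only
    rw [energy_iota_add_col3]
    nlinarith [neg_sq_div_le_quadratic hc (lam * G.trace + π) (a 2),
      mul_nonneg hμ.le (sq_nonneg (a 0)), mul_nonneg hμ.le (sq_nonneg (a 1))]
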